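/- Let H be a group with finite symmetric generating set S whose word metric is δ-hyperbolic. For any A ≥ 0 there exists a constant κ ≥ 0, depending only on A, H, S and δ, such that every h ∈ H satisfying (1, h²)_h ≤ A (equivalently 2|h| − |h²| ≤ 2A) is κ-almost conjugacy minimal. -/

import Mathlib

open Set

/-- The word length of `h` with respect to the generating set `S`: the least `n` such
that `h` is a product of `n` elements of `S`. -/
noncomputable def wordLength {H : Type*} [Group H] (S : Set H) (h : H) : ℕ :=
  sInf {n | ∃ l : List H, l.length = n ∧ (∀ x ∈ l, x ∈ S) ∧ l.prod = h}

/-- The word metric: `d(a,b) = |a⁻¹ b|`. -/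
noncomputable def wordDist {H : Type*} [Group H] (S : Set H) (a b : H) : ℕ :=
  wordLength S (a⁻¹ * b)

/-- `g : {0,…,n} → H` is a discrete geodesic (of length `n`) in the word metric:
`d(g i, g j) = |i − j|` for all `i, j ≤ n`. -/
def IsDiscreteGeodesic {H : Type*} [Group H] (S : Set H) (g : ℕ → H) (n : ℕ) : Prop :=
  ∀ i j : ℕ, i ≤ j → j ≤ n → wordDist S (g i) (g j) = j - i

/-- The Gromov product `(x,y)_z = ½(d(x,z) + d(y,z) − d(x,y))` in the word metric. -/
noncomputable def gromovProd {H : Type*} [Group H] (S : Set H) (x y z : H) : ℝ :=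
  ((wordDist S x z : ℝ) + (wordDist S y z : ℝ) - (wordDist S x y : ℝ)) / 2

/-- The word metric of `(H,S)` is `δ`-hyperbolic: geodesic triangles in the Cayley graph
are `δ`-thin, i.e. for any `x, y, z`, any discrete geodesics `f` from `z` to `x` and `g`
from `z` to `y`, and any `i` with `i ≤ (x,y)_z`, one has `d(f i, g i) ≤ δ`. -/
def WordHyperbolic {H : Type*} [Group H] (S : Set H) (δ : ℝ) : Prop :=
  ∀ (x y z : H) (f g : ℕ → H),
    f 0 = z → f (wordDist S z x) = x → IsDiscreteGeodesic S f (wordDist S z x) →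
    g 0 = z → g (wordDist S z y) = y → IsDiscreteGeodesic S g (wordDist S z y) →
    ∀ i : ℕ, i ≤ wordDist S z x → i ≤ wordDist S z y →
      (i : ℝ) ≤ gromovProd S x y z →
      (wordDist S (f i) (g i) : ℝ) ≤ δ

/-- `h` is `κ`-almost conjugacy minimal: `|h| ≤ |h'| + κ` for every conjugate `h'` of
`h` in `H`. -/
def AlmostConjMin {H : Type*} [Group H] (S : Set H) (κ : ℝ) (h : H) : Prop :=
  ∀ g : H, (wordLength S h : ℝ) ≤ (wordLength S (g⁻¹ * h * g) : ℝ) + κ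

/-- `h` is conjugacy minimal: `|h| ≤ |h'|` for every conjugate `h'` of `h` in `H`. -/
def ConjMin {H : Type*} [Group H] (S : Set H) (h : H) : Prop :=
  ∀ g : H, wordLength S h ≤ wordLength S (g⁻¹ * h * g)

/-! The triangle condition yields Gromov's four-point condition
`(x,z)_w ≥ min((x,y)_w, (y,z)_w) − δ − 1`. Apply it along the orbit `1, h, h², …`: left
invariance turns `(1,h²)_h ≤ A` into `(hᵏ,hᵏ⁺²)_{hᵏ⁺¹} ≤ A` for every `k`, and when `|h|` is
large compared with `B = A + δ + 1` the four-point condition propagates this local bound to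
`(1,hᵏ⁺²)_{hᵏ⁺¹} ≤ B`. Hence each step adds at least `|h| − 2B` to the distance from `1`, so
`|hᵏ| ≥ k(|h| − 2B)`. On the other hand `hᵏ = g h'ᵏ g⁻¹` for `h' = g⁻¹hg` gives
`|hᵏ| ≤ 2|g| + k|h'|`; letting `k → ∞` yields `|h| ≤ |h'| + 2B`. -/

lemma le_of_forall_natCast_mul_le_add {c m C : ℝ} (h : ∀ k : ℕ, k * c ≤ C + k * m) : c ≤ m := by
  by_contra! hlt
  obtain ⟨k, hk⟩ := exists_nat_gt (C / (c - m))
  rw [div_lt_iff₀ (sub_pos.mpr hlt)] at hk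
  linarith [h k]

section WordGeometry

variable {H : Type*} [Group H] {S : Set H}

section Elementary

lemma wordLength_prod_le_length {l : List H} (hl : ∀ x ∈ l, x ∈ S) :
    wordLength S l.prod ≤ l.length :=
  Nat.sInf_le ⟨l, rfl, hl, rfl⟩

lemma wordLength_one : wordLength S (1 : H) = 0 :=
  Nat.le_zero.mp (wordLength_prod_le_length (l := []) (by simp))

lemma wordDist_self (a : H) : wordDist S a a = 0 := by
  simp [wordDist, wordLength_one]

lemma wordDist_one_left (a : H) : wordDist S 1 a = wordLength S a := by
  simp [wordDist]

lemma wordDist_pow_pow_succ (h : H) (k : ℕ) :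
    wordDist S (h ^ k) (h ^ (k + 1)) = wordLength S h := by
  simp [wordDist, pow_succ]

lemma wordDist_mul_left (g a b : H) : wordDist S (g * a) (g * b) = wordDist S a b := by
  simp [wordDist, mul_assoc]

lemma gromovProd_mul_left (g x y z : H) :
    gromovProd S (g * x) (g * y) (g * z) = gromovProd S x y z := by
  simp [gromovProd, wordDist_mul_left]

lemma gromovProd_pow_le {A : ℝ} {h : H} (hh : gromovProd S 1 (h * h) h ≤ A) (k : ℕ) :
    gromovProd S (h ^ k) (h ^ (k + 2)) (h ^ (k + 1)) ≤ A := by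
  calc gromovProd S (h ^ k) (h ^ (k + 2)) (h ^ (k + 1))
      = gromovProd S (h ^ k * 1) (h ^ k * (h * h)) (h ^ k * h) := by
        rw [mul_one, ← mul_assoc, ← pow_succ, ← pow_succ]
    _ = gromovProd S 1 (h * h) h := gromovProd_mul_left _ _ _ _
    _ ≤ A := hh

lemma wordDist_take_prod_le (l : List H) (hl : ∀ x ∈ l, x ∈ S) {i j : ℕ} (hij : i ≤ j) :
    wordDist S (l.take i).prod (l.take j).prod ≤ j - i := by
  have hsplit := List.prod_take_mul_prod_drop (l.take j) i
  rw [List.take_take, Nat.min_eq_left hij] at hsplit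
  rw [wordDist, ← hsplit, inv_mul_cancel_left]
  refine (wordLength_prod_le_length fun x hx => hl x ?_).trans ?_
  · exact List.mem_of_mem_take (List.mem_of_mem_drop hx)
  · simp only [List.length_drop, List.length_take]
    omega

end Elementary

section WordMetric

variable (hSsym : ∀ s ∈ S, s⁻¹ ∈ S) (hSgen : Subgroup.closure S = ⊤)
include hSsym hSgen

lemma exists_word_length_eq_wordLength (h : H) :
    ∃ l : List H, l.length = wordLength S h ∧ (∀ x ∈ l, x ∈ S) ∧ l.prod = h := by
  have hmem : h ∈ (Subgroup.closure S).toSubmonoid := by rw [hSgen]; trivial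
  have hinv : S ∪ S⁻¹ = S :=
    Set.union_eq_self_of_subset_right fun x hx => by simpa using hSsym x⁻¹ hx
  rw [Subgroup.closure_toSubmonoid, hinv] at hmem
  obtain ⟨l, hlS, hlh⟩ := Submonoid.exists_list_of_mem_closure hmem
  exact Nat.sInf_mem (⟨l.length, l, rfl, hlS, hlh⟩ :
    {n | ∃ l : List H, l.length = n ∧ (∀ x ∈ l, x ∈ S) ∧ l.prod = h}.Nonempty)

lemma wordLength_mul_le (a b : H) :
    wordLength S (a * b) ≤ wordLength S a + wordLength S b := by
  obtain ⟨la, hla, hlaS, rfl⟩ := exists_word_length_eq_wordLength hSsym hSgen a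
  obtain ⟨lb, hlb, hlbS, rfl⟩ := exists_word_length_eq_wordLength hSsym hSgen b
  rw [← hla, ← hlb, ← List.length_append, ← List.prod_append]
  exact wordLength_prod_le_length fun x hx => (List.mem_append.mp hx).elim (hlaS x) (hlbS x)

lemma wordLength_inv_le (a : H) : wordLength S a⁻¹ ≤ wordLength S a := by
  obtain ⟨l, hl, hlS, rfl⟩ := exists_word_length_eq_wordLength hSsym hSgen a
  have hword : ∀ x ∈ (l.map (·⁻¹)).reverse, x ∈ S := by
    intro x hx
    obtain ⟨y, hy, rfl⟩ := List.mem_map.mp (List.mem_reverse.mp hx)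
    exact hSsym y (hlS y hy)
  simpa [hl, ← List.prod_inv_reverse] using wordLength_prod_le_length hword

lemma wordLength_inv (a : H) : wordLength S a⁻¹ = wordLength S a :=
  (wordLength_inv_le hSsym hSgen a).antisymm (by simpa using wordLength_inv_le hSsym hSgen a⁻¹)

lemma wordDist_comm (a b : H) : wordDist S a b = wordDist S b a := by
  rw [wordDist, ← wordLength_inv hSsym hSgen, mul_inv_rev, inv_inv, wordDist]

lemma wordDist_triangle (a b c : H) : wordDist S a c ≤ wordDist S a b + wordDist S b c := by
  simpa [wordDist, mul_assoc] using wordLength_mul_le hSsym hSgen (a⁻¹ * b) (b⁻¹ * c)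

lemma wordLength_pow_le (a : H) (k : ℕ) : wordLength S (a ^ k) ≤ k * wordLength S a := by
  induction k with
  | zero => simp [wordLength_one]
  | succ k ih =>
    rw [pow_succ, Nat.succ_mul]
    exact (wordLength_mul_le hSsym hSgen _ _).trans (by omega)

lemma wordLength_pow_le_conj (g h : H) (k : ℕ) :
    wordLength S (h ^ k) ≤ 2 * wordLength S g + k * wordLength S (g⁻¹ * h * g) := by
  have hconj : h ^ k = g * (g⁻¹ * h * g) ^ k * g⁻¹ := by
    rw [show (g⁻¹ * h * g) ^ k = g⁻¹ * h ^ k * g by simpa using conj_pow (a := g⁻¹) (b := h)]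
    group
  have := wordLength_mul_le hSsym hSgen (g * (g⁻¹ * h * g) ^ k) g⁻¹
  have := wordLength_mul_le hSsym hSgen g ((g⁻¹ * h * g) ^ k)
  have := wordLength_pow_le hSsym hSgen (g⁻¹ * h * g) k
  rw [hconj]
  rw [wordLength_inv hSsym hSgen] at *
  omega

lemma isDiscreteGeodesic_of_wordDist_le {f : ℕ → H} {n : ℕ}
    (hle : ∀ i j, i ≤ j → j ≤ n → wordDist S (f i) (f j) ≤ j - i)
    (hend : wordDist S (f 0) (f n) = n) : IsDiscreteGeodesic S f n := by
  intro i j hij hjn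
  have := wordDist_triangle hSsym hSgen (f 0) (f i) (f n)
  have := wordDist_triangle hSsym hSgen (f i) (f j) (f n)
  have := hle 0 i (Nat.zero_le i) (hij.trans hjn)
  have := hle j n hjn le_rfl
  have := hle i j hij hjn
  omega

lemma exists_isDiscreteGeodesic (z x : H) :
    ∃ f : ℕ → H, f 0 = z ∧ f (wordDist S z x) = x ∧ IsDiscreteGeodesic S f (wordDist S z x) := by
  obtain ⟨l, hlen, hlS, hlp⟩ := exists_word_length_eq_wordLength hSsym hSgen (z⁻¹ * x)
  have hend : z * (l.take (wordDist S z x)).prod = x := by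
    rw [wordDist, ← hlen, List.take_length, hlp, mul_inv_cancel_left]
  refine ⟨fun i => z * (l.take i).prod, by simp, hend,
    isDiscreteGeodesic_of_wordDist_le hSsym hSgen (fun i j hij _ => ?_) ?_⟩
  · rw [wordDist_mul_left]
    exact wordDist_take_prod_le l hlS hij
  · simp only [List.take_zero, List.prod_nil, mul_one]
    rw [hend]

end WordMetric

section GromovProduct

variable (hSsym : ∀ s ∈ S, s⁻¹ ∈ S) (hSgen : Subgroup.closure S = ⊤)
include hSsym hSgen

lemma gromovProd_comm (x y z : H) : gromovProd S x y z = gromovProd S y x z := by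
  rw [gromovProd, gromovProd, wordDist_comm hSsym hSgen x y]
  ring

lemma gromovProd_le_wordDist (x y z : H) : gromovProd S x y z ≤ wordDist S z x := by
  have : (wordDist S y z : ℝ) ≤ wordDist S x y + wordDist S z x := by
    rw [← wordDist_comm hSsym hSgen y x, ← wordDist_comm hSsym hSgen x z]
    exact_mod_cast wordDist_triangle hSsym hSgen y x z
  rw [gromovProd, wordDist_comm hSsym hSgen x z]
  linarith

lemma gromovProd_nonneg (x y z : H) : 0 ≤ gromovProd S x y z := by
  have : (wordDist S x y : ℝ) ≤ wordDist S x z + wordDist S y z := by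
    rw [← wordDist_comm hSsym hSgen z y]
    exact_mod_cast wordDist_triangle hSsym hSgen x z y
  rw [gromovProd]
  linarith

lemma gromovProd_add_gromovProd (x y z : H) :
    gromovProd S x y z + gromovProd S x z y = wordDist S y z := by
  rw [gromovProd, gromovProd, wordDist_comm hSsym hSgen x z, wordDist_comm hSsym hSgen z y]
  ring

lemma le_gromovProd_of_isDiscreteGeodesic {w x z : H} {f e : ℕ → H}
    (hfx : f (wordDist S w x) = x) (hf : IsDiscreteGeodesic S f (wordDist S w x))
    (hez : e (wordDist S w z) = z) (he : IsDiscreteGeodesic S e (wordDist S w z))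
    {i : ℕ} (hix : i ≤ wordDist S w x) (hiz : i ≤ wordDist S w z) :
    (i : ℝ) - wordDist S (f i) (e i) / 2 ≤ gromovProd S x z w := by
  have hfi : wordDist S (f i) x = wordDist S w x - i := by
    simpa [hfx] using hf i _ hix le_rfl
  have hei : wordDist S (e i) z = wordDist S w z - i := by
    simpa [hez] using he i _ hiz le_rfl
  have := wordDist_triangle hSsym hSgen x (f i) z
  have := wordDist_triangle hSsym hSgen (f i) (e i) z
  have hxz : wordDist S x z + 2 * i ≤ wordDist S w x + wordDist S (f i) (e i) + wordDist S w z := by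
    rw [wordDist_comm hSsym hSgen x (f i)] at *
    omega
  have hxz' : (wordDist S x z : ℝ) + 2 * i ≤
      wordDist S w x + wordDist S (f i) (e i) + wordDist S w z := by
    exact_mod_cast hxz
  rw [gromovProd, wordDist_comm hSsym hSgen x w, wordDist_comm hSsym hSgen z w]
  linarith

/-- The `1` is lost to rounding the Gromov product down to a vertex of the geodesics. -/
lemma min_gromovProd_sub_le {δ : ℝ} (hhyp : WordHyperbolic S δ) (w x y z : H) :
    min (gromovProd S x y w) (gromovProd S y z w) - (δ + 1) ≤ gromovProd S x z w := by
  set t := min (gromovProd S x y w) (gromovProd S y z w)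
  have ht : 0 ≤ t := le_min (gromovProd_nonneg hSsym hSgen ..) (gromovProd_nonneg hSsym hSgen ..)
  set i := ⌊t⌋₊
  have hit : (i : ℝ) ≤ t := Nat.floor_le ht
  have hti : t - 1 < i := Nat.sub_one_lt_floor t
  have hixy : (i : ℝ) ≤ gromovProd S x y w := hit.trans (min_le_left _ _)
  have hiyz : (i : ℝ) ≤ gromovProd S y z w := hit.trans (min_le_right _ _)
  have hix : i ≤ wordDist S w x := by
    exact_mod_cast hixy.trans (gromovProd_le_wordDist hSsym hSgen x y w)
  have hiy : i ≤ wordDist S w y := by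
    exact_mod_cast hiyz.trans (gromovProd_le_wordDist hSsym hSgen y z w)
  have hiz : i ≤ wordDist S w z := by
    rw [gromovProd_comm hSsym hSgen] at hiyz
    exact_mod_cast hiyz.trans (gromovProd_le_wordDist hSsym hSgen z y w)
  obtain ⟨f, hfw, hfx, hf⟩ := exists_isDiscreteGeodesic hSsym hSgen w x
  obtain ⟨g, hgw, hgy, hg⟩ := exists_isDiscreteGeodesic hSsym hSgen w y
  obtain ⟨e, hew, hez, he⟩ := exists_isDiscreteGeodesic hSsym hSgen w z
  have hfg := hhyp x y w f g hfw hfx hf hgw hgy hg i hix hiy hixy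
  have hge := hhyp y z w g e hgw hgy hg hew hez he i hiy hiz hiyz
  have hfe : (wordDist S (f i) (e i) : ℝ) ≤ wordDist S (f i) (g i) + wordDist S (g i) (e i) := by
    exact_mod_cast wordDist_triangle hSsym hSgen (f i) (g i) (e i)
  linarith [le_gromovProd_of_isDiscreteGeodesic hSsym hSgen hfx hf hez he hix hiz]

end GromovProduct

section Orbit

variable (hSsym : ∀ s ∈ S, s⁻¹ ∈ S) (hSgen : Subgroup.closure S = ⊤)
include hSsym hSgen

lemma gromovProd_zero_le_of_local {δ A : ℝ} (hδ : 0 ≤ δ) (hhyp : WordHyperbolic S δ)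
    {x : ℕ → H} {n : ℕ} (hstep : ∀ k, wordDist S (x k) (x (k + 1)) = n)
    (hloc : ∀ k, gromovProd S (x k) (x (k + 2)) (x (k + 1)) ≤ A)
    (hn : 2 * (A + δ + 1) < n) (k : ℕ) :
    gromovProd S (x 0) (x (k + 2)) (x (k + 1)) ≤ A + δ + 1 := by
  induction k with
  | zero => linarith [hloc 0]
  | succ k ih =>
    have hsum := gromovProd_add_gromovProd hSsym hSgen (x 0) (x (k + 2)) (x (k + 1))
    rw [wordDist_comm hSsym hSgen, hstep] at hsum
    have hfour := min_gromovProd_sub_le hSsym hSgen hhyp (x (k + 2)) (x (k + 1)) (x 0) (x (k + 3))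
    rw [gromovProd_comm hSsym hSgen (x (k + 1))] at hfour
    have := hloc (k + 1)
    -- `(x 0, x (k+1))_{x (k+2)} = n - (x 0, x (k+2))_{x (k+1)} > A + δ + 1`, so the minimum is
    -- attained at the other product.
    rcases min_le_iff.mp (by linarith : min _ _ ≤ A + δ + 1) with hfirst | hsecond
    · linarith
    · exact hsecond

lemma natCast_mul_le_wordDist {B : ℝ} (hB : 0 ≤ B) {x : ℕ → H} {n : ℕ}
    (hstep : ∀ k, wordDist S (x k) (x (k + 1)) = n)
    (hgp : ∀ k, gromovProd S (x 0) (x (k + 2)) (x (k + 1)) ≤ B) (k : ℕ) :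
    k * (n - 2 * B) ≤ wordDist S (x 0) (x k) := by
  induction k with
  | zero => simp
  | succ k ih =>
    have hk : gromovProd S (x 0) (x (k + 1)) (x k) ≤ B := by
      cases k with
      | zero =>
        have := gromovProd_le_wordDist hSsym hSgen (x 0) (x 1) (x 0)
        rw [wordDist_self, Nat.cast_zero] at this
        linarith
      | succ k => exact hgp k
    have hdef : 2 * gromovProd S (x 0) (x (k + 1)) (x k) =
        wordDist S (x 0) (x k) + n - wordDist S (x 0) (x (k + 1)) := by
      rw [gromovProd, wordDist_comm hSsym hSgen (x (k + 1)), hstep]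
      ring
    push_cast
    linarith

lemma natCast_mul_le_wordLength_pow {δ A : ℝ} (hδ : 0 ≤ δ) (hhyp : WordHyperbolic S δ)
    (hA : 0 ≤ A) {h : H} (hh : gromovProd S 1 (h * h) h ≤ A) (k : ℕ) :
    k * (wordLength S h - 2 * (A + δ + 1)) ≤ wordLength S (h ^ k) := by
  rcases le_or_gt (wordLength S h : ℝ) (2 * (A + δ + 1)) with hsmall | hlarge
  · exact (mul_nonpos_of_nonneg_of_nonpos k.cast_nonneg (by linarith)).trans (Nat.cast_nonneg _)
  · have hstep := wordDist_pow_pow_succ (S := S) h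
    simpa [wordDist_one_left] using natCast_mul_le_wordDist hSsym hSgen (by linarith) hstep
      (gromovProd_zero_le_of_local hSsym hSgen hδ hhyp hstep (gromovProd_pow_le hh) hlarge) k

lemma le_wordLength_conj_of_forall_natCast_mul_le {c : ℝ} {h : H}
    (hpow : ∀ k : ℕ, k * c ≤ wordLength S (h ^ k)) (g : H) : c ≤ wordLength S (g⁻¹ * h * g) :=
  le_of_forall_natCast_mul_le_add (C := 2 * wordLength S g) fun k =>
    (hpow k).trans (by exact_mod_cast wordLength_pow_le_conj hSsym hSgen g h k)

end Orbit

end WordGeometry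

theorem stmt8_general {H : Type*} [Group H] (S : Set H) (δ : ℝ)
    (hSsym : ∀ s ∈ S, s⁻¹ ∈ S) (hSgen : Subgroup.closure S = ⊤)
    (hδ : 0 ≤ δ) (hhyp : WordHyperbolic S δ) :
    ∀ A : ℝ, 0 ≤ A → ∃ κ : ℝ, 0 ≤ κ ∧
      ∀ h : H, gromovProd S 1 (h * h) h ≤ A → AlmostConjMin S κ h := by
  intro A hA
  refine ⟨2 * (A + δ + 1), by linarith, fun h hh g => ?_⟩
  have := le_wordLength_conj_of_forall_natCast_mul_le hSsym hSgen
    (natCast_mul_le_wordLength_pow hSsym hSgen hδ hhyp hA hh) g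
  linarith

/-- Let `H` be a group with finite symmetric generating set `S` whose
word metric is `δ`-hyperbolic. For any `A ≥ 0` there is `κ ≥ 0`, depending only on `A`,
`H`, `S`, `δ`, such that every `h ∈ H` with `(1,h²)_h ≤ A` is `κ`-almost conjugacy
minimal. -/
theorem stmt8 {H : Type*} [Group H] (S : Set H) (δ : ℝ)
    (hSfin : S.Finite) (hSsym : ∀ s ∈ S, s⁻¹ ∈ S) (hSgen : Subgroup.closure S = ⊤)
    (hδ : 0 ≤ δ) (hhyp : WordHyperbolic S δ) :
    ∀ A : ℝ, 0 ≤ A → ∃ κ : ℝ, 0 ≤ κ ∧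
      ∀ h : H, gromovProd S 1 (h * h) h ≤ A → AlmostConjMin S κ h :=
  stmt8_general S δ hSsym hSgen hδ hhyp
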